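/- arXiv:1008.1824 — 5 statements merged into one kernel-verified Lean document; each statement's English description precedes it below -/
import Mathlib

section
/- (Key decomposition bound in the proof of the Discrete Adiabatic Theorem.) Let Ω be a finite state space, let P_final be a row-stochastic matrix on Ω with stationary distribution π_f (π_f P_final = π_f), let T be a positive integer, and for each j ∈ {1,…,T} suppose P_j = (1−c_j) R_j + c_j P_final, where c_j ∈ [0,1] and R_j is a row-stochastic matrix on Ω. Then for every integer N with 0 ≤ N < T and every probability distribution ν on Ω, ‖ν P_1 P_2 ⋯ P_T − π_f‖_TV ≤ (∏_{j=N+1}^{T} c_j) · max_μ ‖μ P_final^{T−N} − π_f‖_TV + (1 − ∏_{j=N+1}^{T} c_j), where the maximum is over all probability distributions μ on Ω. -/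
open Matrix BigOperators Finset

/-- `ν` is a probability distribution on the finite set `Ω`. -/
def IsProbDist {Ω : Type*} [Fintype Ω] (ν : Ω → ℝ) : Prop :=
  (∀ i, 0 ≤ ν i) ∧ ∑ i, ν i = 1

/-- Total variation distance between two (signed) measures on a finite set. -/
noncomputable def tvDist {Ω : Type*} [Fintype Ω] (μ ν : Ω → ℝ) : ℝ :=
  (1 / 2) * ∑ x, |μ x - ν x|

/-- A matrix is row-stochastic: nonnegative entries and each row sums to `1`. -/
def IsRowStochastic {Ω : Type*} [Fintype Ω] (P : Matrix Ω Ω ℝ) : Prop :=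
  (∀ i j, 0 ≤ P i j) ∧ ∀ i, ∑ j, P i j = 1

/-!
Put `μ = ν P₁ ⋯ P_N` and `w = ∏_{j>N} c_j`. Expanding every factor
`P_j = (1 - c_j) R_j + c_j P_final` of `P_{N+1} ⋯ P_T`, the single path that always picks
`P_final` contributes `w • μ P_final^(T-N)` to `μ P_{N+1} ⋯ P_T`, and all other paths together
a nonnegative vector of mass `1 - w`. Hence
`‖μ P_{N+1} ⋯ P_T - π_f‖_TV ≤ w ‖μ P_final^(T-N) - π_f‖_TV + (1 - w)`.
-/

section

variable {Ω : Type*} [Fintype Ω]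

theorem tvDist_le_one {μ π : Ω → ℝ} (hμ : IsProbDist μ) (hπ : IsProbDist π) :
    tvDist μ π ≤ 1 := by
  have h : ∑ x, |μ x - π x| ≤ ∑ x, (μ x + π x) := sum_le_sum fun x _ =>
    (abs_sub _ _).trans_eq (by rw [abs_of_nonneg (hμ.1 x), abs_of_nonneg (hπ.1 x)])
  rw [sum_add_distrib, hμ.2, hπ.2] at h
  unfold tvDist
  linarith

theorem tvDist_le_of_smul_le {x y π : Ω → ℝ} {t : ℝ} (hx : ∑ i, x i = 1) (hy : ∑ i, y i = 1)
    (hπ : IsProbDist π) (ht : 0 ≤ t) (hyx : t • y ≤ x) :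
    tvDist x π ≤ t * tvDist y π + (1 - t) := by
  set η := x - t • y
  have hη : ∀ i, 0 ≤ η i := fun i => sub_nonneg.2 (hyx i)
  have hη_sum : ∑ i, η i = 1 - t := by
    simp only [η, Pi.sub_apply, Pi.smul_apply, smul_eq_mul, sum_sub_distrib, ← mul_sum, hx, hy,
      mul_one]
  have ht1 : 0 ≤ 1 - t := hη_sum ▸ sum_nonneg fun i _ => hη i
  have pointwise : ∀ i, |x i - π i| ≤ t * |y i - π i| + (η i + (1 - t) * π i) := by
    intro i
    have hπi := mul_nonneg ht1 (hπ.1 i)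
    calc |x i - π i| = |t * (y i - π i) + (η i - (1 - t) * π i)| := by
          simp only [η, Pi.sub_apply, Pi.smul_apply, smul_eq_mul]; ring_nf
      _ ≤ |t * (y i - π i)| + |η i - (1 - t) * π i| := abs_add_le _ _
      _ ≤ t * |y i - π i| + (η i + (1 - t) * π i) := by
          rw [abs_mul, abs_of_nonneg ht]
          gcongr
          exact abs_le.2 ⟨by linarith [hη i], by linarith⟩
  have total := sum_le_sum fun i (_ : i ∈ univ) => pointwise i
  rw [sum_add_distrib, sum_add_distrib, ← mul_sum, ← mul_sum, hη_sum, hπ.2] at total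
  unfold tvDist
  linarith

theorem vecMul_mono_of_nonneg {x y : Ω → ℝ} {M : Matrix Ω Ω ℝ} (hM : ∀ i j, 0 ≤ M i j)
    (hxy : x ≤ y) : x ᵥ* M ≤ y ᵥ* M :=
  fun j => sum_le_sum fun i _ => mul_le_mul_of_nonneg_right (hxy i) (hM i j)

end

section RowStochastic

variable {Ω : Type*} [Fintype Ω] [DecidableEq Ω]

theorem isRowStochastic_iff_mem_rowStochastic {P : Matrix Ω Ω ℝ} :
    IsRowStochastic P ↔ P ∈ rowStochastic ℝ Ω :=
  mem_rowStochastic_iff_sum.symm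

theorem IsProbDist.vecMul {ν : Ω → ℝ} {M : Matrix Ω Ω ℝ} (hν : IsProbDist ν)
    (hM : M ∈ rowStochastic ℝ Ω) : IsProbDist (ν ᵥ* M) := by
  refine ⟨nonneg_vecMul_of_mem_rowStochastic hM hν.1, ?_⟩
  have h := vecMul_dotProduct_one_eq_one_rowStochastic hM (x := ν)
  simp only [dotProduct_one] at h
  exact h hν.2

theorem tvDist_vecMul_le_sSup {μ π : Ω → ℝ} {M : Matrix Ω Ω ℝ} (hμ : IsProbDist μ)
    (hπ : IsProbDist π) (hM : M ∈ rowStochastic ℝ Ω) :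
    tvDist (μ ᵥ* M) π ≤ sSup {x : ℝ | ∃ μ : Ω → ℝ, IsProbDist μ ∧ x = tvDist (μ ᵥ* M) π} :=
  le_csSup ⟨1, by rintro _ ⟨μ', hμ', rfl⟩; exact tvDist_le_one (hμ'.vecMul hM) hπ⟩ ⟨μ, hμ, rfl⟩

theorem convexComb_mem_rowStochastic {R Q : Matrix Ω Ω ℝ} {c : ℝ} (hc : c ∈ Set.Icc (0 : ℝ) 1)
    (hR : R ∈ rowStochastic ℝ Ω) (hQ : Q ∈ rowStochastic ℝ Ω) :
    (1 - c) • R + c • Q ∈ rowStochastic ℝ Ω :=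
  convex_rowStochastic hR hQ (sub_nonneg.2 hc.2) hc.1 (sub_add_cancel 1 c)

theorem smul_vecMul_le_vecMul_convexComb {R Q : Matrix Ω Ω ℝ} {c : ℝ} {x : Ω → ℝ}
    (hc : c ≤ 1) (hR : R ∈ rowStochastic ℝ Ω) (hx : 0 ≤ x) :
    c • (x ᵥ* Q) ≤ x ᵥ* ((1 - c) • R + c • Q) := by
  rw [vecMul_add, vecMul_smul, vecMul_smul]
  exact le_add_of_nonneg_left
    (smul_nonneg (sub_nonneg.2 hc) (nonneg_vecMul_of_mem_rowStochastic hR hx))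

variable {ι : Type*} {Q : Matrix Ω Ω ℝ} {P R : ι → Matrix Ω Ω ℝ} {c : ι → ℝ} {l : List ι}

theorem prod_map_mem_rowStochastic (hQ : Q ∈ rowStochastic ℝ Ω)
    (hc : ∀ j ∈ l, c j ∈ Set.Icc (0 : ℝ) 1) (hR : ∀ j ∈ l, R j ∈ rowStochastic ℝ Ω)
    (hP : ∀ j ∈ l, P j = (1 - c j) • R j + c j • Q) : (l.map P).prod ∈ rowStochastic ℝ Ω :=
  Submonoid.list_prod_mem _ <| by
    simpa using fun j hj => hP j hj ▸ convexComb_mem_rowStochastic (hc j hj) (hR j hj) hQ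

theorem prod_smul_vecMul_pow_le_vecMul_prod (hQ : Q ∈ rowStochastic ℝ Ω)
    (hc : ∀ j ∈ l, c j ∈ Set.Icc (0 : ℝ) 1) (hR : ∀ j ∈ l, R j ∈ rowStochastic ℝ Ω)
    (hP : ∀ j ∈ l, P j = (1 - c j) • R j + c j • Q) {x : Ω → ℝ} (hx : 0 ≤ x) :
    (l.map c).prod • (x ᵥ* Q ^ l.length) ≤ x ᵥ* (l.map P).prod := by
  induction l generalizing x with
  | nil => simp
  | cons j l ih =>
    simp only [List.forall_mem_cons] at hc hR hP
    have hPj : P j ∈ rowStochastic ℝ Ω := hP.1 ▸ convexComb_mem_rowStochastic hc.1 hR.1 hQ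
    have hstep : c j • (x ᵥ* Q) ≤ x ᵥ* P j :=
      hP.1 ▸ smul_vecMul_le_vecMul_convexComb hc.1.2 hR.1 hx
    calc ((j :: l).map c).prod • (x ᵥ* Q ^ (j :: l).length)
        = (l.map c).prod • ((c j • (x ᵥ* Q)) ᵥ* Q ^ l.length) := by
          rw [List.map_cons, List.prod_cons, List.length_cons, pow_succ', ← vecMul_vecMul,
            smul_vecMul, smul_smul, mul_comm]
      _ ≤ (l.map c).prod • ((x ᵥ* P j) ᵥ* Q ^ l.length) :=
          smul_le_smul_of_nonneg_left
            (vecMul_mono_of_nonneg (fun _ _ => (pow_mem hQ _).1 _ _) hstep) 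
              (List.prod_nonneg (List.forall_mem_map.2 fun j hj => (hc.2 j hj).1))
      _ ≤ (x ᵥ* P j) ᵥ* (l.map P).prod :=
          ih hc.2 hR.2 hP.2 (nonneg_vecMul_of_mem_rowStochastic hPj hx)
      _ = x ᵥ* ((j :: l).map P).prod := by rw [List.map_cons, List.prod_cons, vecMul_vecMul]

end RowStochastic

theorem Nat.prod_Icc_eq_prod_map_range' {M : Type*} [CommMonoid M] (f : ℕ → M) (a b : ℕ) :
    ∏ j ∈ Icc a b, f j = ((List.range' a (b + 1 - a)).map f).prod := by
  rw [Nat.Icc_eq_range']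
  rfl

theorem List.map_range_add_one_eq_map_range'_append {α : Type*} (f : ℕ → α) (m n : ℕ) :
    (List.range (m + n)).map (fun j => f (j + 1))
      = (List.range' 1 m).map f ++ (List.range' (m + 1) n).map f := by
  have hsplit := List.range'_append (s := 1) (m := m) (n := n) (step := 1)
  rw [one_mul, add_comm 1 m] at hsplit
  rw [← List.map_append, hsplit, List.range'_eq_map_range, List.map_map]
  exact List.map_congr_left fun j _ => by simp [add_comm]

theorem adiabatic_decomposition_bound_general
    {Ω : Type*} [Fintype Ω] [DecidableEq Ω]
    (Pfin : Matrix Ω Ω ℝ) (πf : Ω → ℝ)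
    (hPfin : IsRowStochastic Pfin) (hπf : IsProbDist πf)
    (T : ℕ)
    (P R : ℕ → Matrix Ω Ω ℝ) (c : ℕ → ℝ)
    (hc : ∀ j ∈ Finset.Icc 1 T, c j ∈ Set.Icc (0:ℝ) 1)
    (hR : ∀ j ∈ Finset.Icc 1 T, IsRowStochastic (R j))
    (hP : ∀ j ∈ Finset.Icc 1 T, P j = (1 - c j) • R j + c j • Pfin)
    (N : ℕ) (hN : N < T)
    (ν : Ω → ℝ) (hν : IsProbDist ν) :
    tvDist (ν ᵥ* ((List.range T).map (fun j => P (j + 1))).prod) πf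
      ≤ (∏ j ∈ Finset.Icc (N + 1) T, c j) *
          sSup {x : ℝ | ∃ μ : Ω → ℝ, IsProbDist μ ∧ x = tvDist (μ ᵥ* Pfin ^ (T - N)) πf}
        + (1 - ∏ j ∈ Finset.Icc (N + 1) T, c j) := by
  obtain ⟨k, rfl⟩ := Nat.exists_eq_add_of_le hN.le
  rw [Nat.add_sub_cancel_left, Nat.prod_Icc_eq_prod_map_range',
    show N + k + 1 - (N + 1) = k by omega, List.map_range_add_one_eq_map_range'_append, List.prod_append, ← vecMul_vecMul]
  have hIcc : ∀ j ∈ List.range' 1 N ++ List.range' (N + 1) k, j ∈ Icc 1 (N + k) := by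
    intro j hj
    simp only [List.mem_append, List.mem_range'_1, mem_Icc] at hj ⊢
    omega
  obtain ⟨hc₁, hc₂⟩ := List.forall_mem_append.1 fun j hj => hc j (hIcc j hj)
  obtain ⟨hR₁, hR₂⟩ := List.forall_mem_append.1 fun j hj =>
    isRowStochastic_iff_mem_rowStochastic.1 (hR j (hIcc j hj))
  obtain ⟨hP₁, hP₂⟩ := List.forall_mem_append.1 fun j hj => hP j (hIcc j hj)
  rw [isRowStochastic_iff_mem_rowStochastic] at hPfin
  set μ := ν ᵥ* ((List.range' 1 N).map P).prod
  have hμ : IsProbDist μ := hν.vecMul (prod_map_mem_rowStochastic hPfin hc₁ hR₁ hP₁)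
  have hw : 0 ≤ ((List.range' (N + 1) k).map c).prod :=
    List.prod_nonneg (List.forall_mem_map.2 fun j hj => (hc₂ j hj).1)
  calc tvDist (μ ᵥ* ((List.range' (N + 1) k).map P).prod) πf
      ≤ ((List.range' (N + 1) k).map c).prod * tvDist (μ ᵥ* Pfin ^ k) πf
          + (1 - ((List.range' (N + 1) k).map c).prod) := by
        refine tvDist_le_of_smul_le (hμ.vecMul (prod_map_mem_rowStochastic hPfin hc₂ hR₂ hP₂)).2
          (hμ.vecMul (pow_mem hPfin k)).2 hπf hw ?_
        simpa using prod_smul_vecMul_pow_le_vecMul_prod hPfin hc₂ hR₂ hP₂ hμ.1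
    _ ≤ _ := by
        gcongr
        exact tvDist_vecMul_le_sSup hμ hπf (pow_mem hPfin k)

/-- **Key decomposition bound** in the proof of the Discrete Adiabatic Theorem:
if each step matrix decomposes as `P_j = (1-c_j) R_j + c_j P_final`, then the
distance of `ν P_1 ⋯ P_T` to `π_f` is controlled by the product of the `c_j` over
the last `T - N` steps. -/
theorem adiabatic_decomposition_bound
    {Ω : Type*} [Fintype Ω] [DecidableEq Ω]
    (Pfin : Matrix Ω Ω ℝ) (πf : Ω → ℝ)
    (hPfin : IsRowStochastic Pfin) (hπf : IsProbDist πf) (hstat : πf ᵥ* Pfin = πf)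
    (T : ℕ) (hT : 0 < T)
    (P R : ℕ → Matrix Ω Ω ℝ) (c : ℕ → ℝ)
    (hc : ∀ j ∈ Finset.Icc 1 T, c j ∈ Set.Icc (0:ℝ) 1)
    (hR : ∀ j ∈ Finset.Icc 1 T, IsRowStochastic (R j))
    (hP : ∀ j ∈ Finset.Icc 1 T, P j = (1 - c j) • R j + c j • Pfin)
    (N : ℕ) (hN : N < T)
    (ν : Ω → ℝ) (hν : IsProbDist ν) :
    tvDist (ν ᵥ* ((List.range T).map (fun j => P (j + 1))).prod) πf
      ≤ (∏ j ∈ Finset.Icc (N + 1) T, c j) *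
          sSup {x : ℝ | ∃ μ : Ω → ℝ, IsProbDist μ ∧ x = tvDist (μ ᵥ* Pfin ^ (T - N)) πf}
        + (1 - ∏ j ∈ Finset.Icc (N + 1) T, c j) :=
  adiabatic_decomposition_bound_general Pfin πf hPfin hπf T P R c hc hR hP N hN ν hν
end

section
/- (Lower bound for the linear-interpolation example.) Let n ≥ 1 and work on the state space Ω = {0,1,…,n}. Let P_initial be the row-stochastic matrix whose every row is the point mass at 0, and let P_final be the row-stochastic matrix with (P_final)_{i,i+1} = 1 for 0 ≤ i ≤ n−1 and (P_final)_{n,n} = 1, so that π_f = δ_n is the unique stationary distribution of P_final. For s ∈ [0,1] let P_s = (1−s) P_initial + s P_final. Then for every integer T ≥ n and every probability distribution ν on Ω, ‖ν P_{1/T} P_{2/T} ⋯ P_{(T−1)/T} P_1 − δ_n‖_TV ≥ 1 − T! / ((T−n)! · T^n). -/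
open Matrix BigOperators Finset

/-- The transition matrix on `{0,1,…,n}` each of whose rows is the point mass at `0`. -/
noncomputable def exPinit (n : ℕ) : Matrix (Fin (n + 1)) (Fin (n + 1)) ℝ :=
  fun _ j => if j = 0 then 1 else 0

/-- The transition matrix on `{0,1,…,n}` moving deterministically `i ↦ i+1`
(for `i < n`) with absorption at `n`:  `(P_final)_{i,i+1} = 1` for `0 ≤ i ≤ n-1`
and `(P_final)_{n,n} = 1`. -/
noncomputable def exPfin (n : ℕ) : Matrix (Fin (n + 1)) (Fin (n + 1)) ℝ :=
  fun i j => if (j : ℕ) = min ((i : ℕ) + 1) n then 1 else 0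

/-- The point mass `δ_n` at the state `n` of `{0,1,…,n}`. -/
noncomputable def exDelta (n : ℕ) : Fin (n + 1) → ℝ :=
  fun j => if (j : ℕ) = n then 1 else 0

/-! Write `μ_t` for the distribution after the first `t` steps. `P_initial` sends all mass to
`0` and `P_final` moves it one state up, so for `1 ≤ m ≤ n` the mass of `μ_{t+1}` on
`{m, …, n}` is `(t+1)/T` times the mass of `μ_t` on `{m-1, …, n}`. Going back `n` steps from
`t = T` gives `μ_T(n) = ∏_{k<n} (T-k)/T = T!/((T-n)! Tⁿ)`, and any `μ` of total mass `1`
satisfies `‖μ - δ_n‖_TV ≥ 1 - μ(n)`. -/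

section DeterministicMatrix

variable {Ω : Type*} [Fintype Ω] [DecidableEq Ω]

def deterministicMatrix (f : Ω → Ω) : Matrix Ω Ω ℝ :=
  fun i j => if j = f i then 1 else 0

lemma sum_vecMul_deterministicMatrix (f : Ω → Ω) (μ : Ω → ℝ) (S : Finset Ω) :
    ∑ j ∈ S, (μ ᵥ* deterministicMatrix f) j = ∑ i with f i ∈ S, μ i := by
  simp only [vecMul, dotProduct, deterministicMatrix, mul_ite, mul_one, mul_zero]
  rw [Finset.sum_comm, Finset.sum_filter]
  exact Finset.sum_congr rfl fun i _ => Finset.sum_ite_eq' S (f i) fun _ => μ i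

lemma one_sub_le_tvDist_single (μ : Ω → ℝ) (hμ : ∑ y, μ y = 1) (x : Ω) :
    1 - μ x ≤ tvDist μ (Pi.single x 1) := by
  have hsplit := Finset.add_sum_erase Finset.univ (fun y => |μ y - (Pi.single x 1 : Ω → ℝ) y|)
    (Finset.mem_univ x)
  have hrest : ∑ y ∈ Finset.univ.erase x, μ y = 1 - μ x := by
    rw [← hμ, ← Finset.add_sum_erase Finset.univ μ (Finset.mem_univ x)]
    ring
  have hrest_le : ∑ y ∈ Finset.univ.erase x, μ y
      ≤ ∑ y ∈ Finset.univ.erase x, |μ y - (Pi.single x 1 : Ω → ℝ) y| :=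
    Finset.sum_le_sum fun y hy => by
      rw [Pi.single_eq_of_ne (Finset.ne_of_mem_erase hy), sub_zero]
      exact le_abs_self _
  have hx : 1 - μ x ≤ |μ x - (Pi.single x 1 : Ω → ℝ) x| := by
    rw [Pi.single_eq_same, abs_sub_comm]
    exact le_abs_self _
  unfold tvDist
  linarith

end DeterministicMatrix

def succClamp (n : ℕ) (i : Fin (n + 1)) : Fin (n + 1) :=
  ⟨min (i + 1) n, by omega⟩

lemma exPinit_eq (n : ℕ) : exPinit n = deterministicMatrix fun _ => 0 := rfl

lemma exPfin_eq (n : ℕ) : exPfin n = deterministicMatrix (succClamp n) := by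
  ext i j
  simp [exPfin, deterministicMatrix, succClamp, Fin.ext_iff]

lemma exDelta_eq (n : ℕ) : exDelta n = Pi.single (Fin.last n) 1 := by
  ext j
  simp [exDelta, Pi.single_apply, Fin.ext_iff]

noncomputable def exPinterp (n : ℕ) (s : ℝ) : Matrix (Fin (n + 1)) (Fin (n + 1)) ℝ :=
  (1 - s) • exPinit n + s • exPfin n

section Interpolation

variable {n : ℕ}

lemma sum_vecMul_exPinterp (s : ℝ) (μ : Fin (n + 1) → ℝ) (S : Finset (Fin (n + 1))) :
    ∑ j ∈ S, (μ ᵥ* exPinterp n s) j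
      = (1 - s) * (if 0 ∈ S then ∑ i, μ i else 0) + s * ∑ i with succClamp n i ∈ S, μ i := by
  simp only [exPinterp, vecMul_add, vecMul_smul, Pi.add_apply, Pi.smul_apply, smul_eq_mul,
    Finset.sum_add_distrib, ← Finset.mul_sum, exPinit_eq, exPfin_eq,
    sum_vecMul_deterministicMatrix, Finset.filter_const]
  split_ifs <;> simp

lemma sum_vecMul_exPinterp_univ (s : ℝ) (μ : Fin (n + 1) → ℝ) :
    ∑ j, (μ ᵥ* exPinterp n s) j = ∑ i, μ i := by
  simp only [sum_vecMul_exPinterp, Finset.mem_univ, if_true, Finset.filter_true]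
  ring

lemma sum_vecMul_list_prod_exPinterp (l : List ℝ) (μ : Fin (n + 1) → ℝ) :
    ∑ j, (μ ᵥ* (l.map (exPinterp n)).prod) j = ∑ i, μ i := by
  induction l generalizing μ with
  | nil => simp
  | cons s l ih =>
    rw [List.map_cons, List.prod_cons, ← vecMul_vecMul, ih, sum_vecMul_exPinterp_univ]

def upperMass (m : ℕ) (μ : Fin (n + 1) → ℝ) : ℝ :=
  ∑ j ∈ Finset.univ.filter (fun j : Fin (n + 1) => m ≤ (j : ℕ)), μ j

lemma upperMass_zero (μ : Fin (n + 1) → ℝ) : upperMass 0 μ = ∑ i, μ i := by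
  simp [upperMass]

lemma upperMass_self (μ : Fin (n + 1) → ℝ) : upperMass n μ = μ (Fin.last n) := by
  rw [upperMass, Finset.sum_eq_single_of_mem (Fin.last n) (by simp)]
  intro j hj hne
  simp only [Finset.mem_filter, Finset.mem_univ, true_and] at hj
  exact absurd (Fin.ext (by have := j.isLt; simp only [Fin.val_last]; omega)) hne

/-- Only the `s`-part of `P_s` can reach the states `≥ m ≥ 1`, and it does so from
exactly the states `≥ m - 1`. -/
lemma upperMass_vecMul_exPinterp {m : ℕ} (hm : 1 ≤ m) (hmn : m ≤ n) (s : ℝ)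
    (μ : Fin (n + 1) → ℝ) :
    upperMass m (μ ᵥ* exPinterp n s) = s * upperMass (m - 1) μ := by
  have h0 : (0 : Fin (n + 1)) ∉ Finset.univ.filter fun j : Fin (n + 1) => m ≤ (j : ℕ) := by
    simp only [Finset.mem_filter, Finset.mem_univ, true_and, Fin.val_zero]
    omega
  have hsucc (i : Fin (n + 1)) :
      succClamp n i ∈ (Finset.univ.filter fun j : Fin (n + 1) => m ≤ (j : ℕ)) ↔
        m - 1 ≤ (i : ℕ) := by
    simp only [Finset.mem_filter, Finset.mem_univ, true_and, succClamp]
    omega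
  simp only [upperMass, sum_vecMul_exPinterp, h0, if_false, hsucc, mul_zero, zero_add]

lemma upperMass_vecMul_list_prod_exPinterp (l : List ℝ) (hl : l.length ≤ n)
    (μ : Fin (n + 1) → ℝ) :
    upperMass n (μ ᵥ* (l.map (exPinterp n)).prod) = l.prod * upperMass (n - l.length) μ := by
  induction l generalizing μ with
  | nil => simp
  | cons s l ih =>
    simp only [List.length_cons] at hl
    rw [List.map_cons, List.prod_cons, ← vecMul_vecMul, ih (by omega),
      upperMass_vecMul_exPinterp (by omega) (by omega), List.prod_cons, List.length_cons,
      Nat.sub_sub]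
    ring

end Interpolation

lemma list_prod_map_range_succ_add_div (r n : ℕ) (c : ℝ) :
    ((List.range n).map fun i => (((r + i : ℕ) : ℝ) + 1) / c).prod
      = (r + n).factorial / (r.factorial * c ^ n) := by
  rw [← List.prod_toFinset _ List.nodup_range, List.toFinset_range, Finset.prod_div_distrib,
    Finset.prod_const, Finset.card_range, ← Nat.factorial_mul_ascFactorial,
    Nat.ascFactorial_eq_prod_range]
  push_cast
  rw [mul_div_mul_left _ _ (by positivity)]
  congr 1
  exact Finset.prod_congr rfl fun i _ => by ring

theorem example_linear_lower_bound_general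
    (n : ℕ) (T : ℕ) (hT : n ≤ T)
    (ν : Fin (n + 1) → ℝ) (hν : IsProbDist ν) :
    tvDist (ν ᵥ* ((List.range T).map (fun j =>
        (1 - (j + 1 : ℝ) / (T : ℝ)) • exPinit n + ((j + 1 : ℝ) / (T : ℝ)) • exPfin n)).prod)
      (exDelta n)
    ≥ 1 - (Nat.factorial T : ℝ) / ((Nat.factorial (T - n) : ℝ) * (T : ℝ) ^ n) := by
  obtain ⟨r, rfl⟩ := Nat.exists_eq_add_of_le' hT
  set s : ℕ → ℝ := fun j => ((j : ℝ) + 1) / ((r + n : ℕ) : ℝ)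
  -- the statement maps over `List.range T` coerced to `List ℝ` through the list monad
  simp only [List.pure_def, List.bind_eq_flatMap, ← List.map_eq_flatMap, List.map_map]
  change tvDist (ν ᵥ* ((List.range (r + n)).map (exPinterp n ∘ s)).prod) (exDelta n) ≥ _
  rw [← List.map_map, List.range_add, List.map_append, List.map_append, List.prod_append,
    ← vecMul_vecMul, exDelta_eq, Nat.add_sub_cancel]
  set μ := ν ᵥ* (((List.range r).map s).map (exPinterp n)).prod
  have hμ : ∑ i, μ i = 1 := by rw [sum_vecMul_list_prod_exPinterp, hν.2]
  have hprod : (((List.range n).map (r + ·)).map s).prod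
      = (r + n).factorial / (r.factorial * ((r + n : ℕ) : ℝ) ^ n) := by
    rw [List.map_map]
    exact list_prod_map_range_succ_add_div r n _
  calc 1 - (r + n).factorial / (r.factorial * ((r + n : ℕ) : ℝ) ^ n)
      = 1 - upperMass n (μ ᵥ* ((((List.range n).map (r + ·)).map s).map (exPinterp n)).prod) := by
        rw [upperMass_vecMul_list_prod_exPinterp _ (by simp), List.length_map, List.length_map,
          List.length_range, Nat.sub_self, upperMass_zero, hμ, hprod, mul_one]
    _ ≤ _ := by
        rw [upperMass_self]
        exact one_sub_le_tvDist_single _ (by rw [sum_vecMul_list_prod_exPinterp, hμ]) _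

/-- **Lower bound for the linear-interpolation example.**
For `P_s = (1-s) P_initial + s P_final` on `{0,…,n}`, every starting distribution
stays at total-variation distance at least `1 - T!/((T-n)! Tⁿ)` from `δ_n`. -/
theorem example_linear_lower_bound
    (n : ℕ) (hn : 1 ≤ n) (T : ℕ) (hT : n ≤ T)
    (ν : Fin (n + 1) → ℝ) (hν : IsProbDist ν) :
    tvDist (ν ᵥ* ((List.range T).map (fun j =>
        (1 - (j + 1 : ℝ) / (T : ℝ)) • exPinit n + ((j + 1 : ℝ) / (T : ℝ)) • exPfin n)).prod)
      (exDelta n)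
    ≥ 1 - (Nat.factorial T : ℝ) / ((Nat.factorial (T - n) : ℝ) * (T : ℝ) ^ n) :=
  example_linear_lower_bound_general n T hT ν hν
end

section
/- (Product estimate in the optimality example.) For all integers n and T with 2 ≤ n ≤ T, one has ∏_{j=T−n+1}^{T−1} (j/T) ≤ ((T − n/2)/T)^{n/2} ≤ e^{−n²/(4T)}. -/
/-!
The `n - 1` factors `j / T` have mean `(T - n/2)/T ≤ 1`, so by AM–GM their product is at most
this mean to the power `n - 1`, which only grows when the exponent drops to `n/2 ≤ n - 1`.
Writing the mean as `1 - x` with `x = n/(2T)`, the bound `1 - x ≤ e^{-x}` gives the second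
inequality.
-/

open BigOperators Finset

theorem Real.prod_le_arith_mean_pow_card {ι : Type*} (s : Finset ι) (f : ι → ℝ)
    (hf : ∀ i ∈ s, 0 ≤ f i) : ∏ i ∈ s, f i ≤ ((∑ i ∈ s, f i) / #s) ^ #s := by
  rcases s.eq_empty_or_nonempty with rfl | hs
  · simp
  have hcard : (0 : ℝ) < #s := by exact_mod_cast hs.card_pos
  have amgm := Real.geom_mean_le_arith_mean s (fun _ ↦ 1) f (fun _ _ ↦ zero_le_one)
    (by simpa using hcard) hf
  simp only [Real.rpow_one, one_mul, sum_const, nsmul_eq_mul, mul_one] at amgm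
  have hprod : 0 ≤ ∏ i ∈ s, f i := prod_nonneg hf
  calc ∏ i ∈ s, f i = ((∏ i ∈ s, f i) ^ (#s : ℝ)⁻¹) ^ #s := by
        rw [← Real.rpow_natCast, ← Real.rpow_mul hprod, inv_mul_cancel₀ hcard.ne',
          Real.rpow_one]
    _ ≤ _ := pow_le_pow_left₀ (Real.rpow_nonneg hprod _) amgm _

theorem Finset.sum_Ico_natCast_mul_two (a b : ℕ) (hab : a ≤ b) :
    (∑ j ∈ Ico a b, (j : ℝ)) * 2 = (b - a) * (a + b - 1) := by
  induction b, hab using Nat.le_induction with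
  | base => simp
  | succ b hab ih =>
    rw [sum_Ico_succ_top hab, add_mul, ih]
    push_cast
    ring

theorem Finset.mean_Ico_natCast (a b : ℕ) (hab : a < b) :
    (∑ j ∈ Ico a b, (j : ℝ)) / #(Ico a b) = (a + b - 1) / 2 := by
  have hlen : ((#(Ico a b) : ℕ) : ℝ) = b - a := by
    rw [Nat.card_Ico, Nat.cast_sub hab.le]
  have hpos : (0 : ℝ) < b - a := by
    rw [sub_pos]; exact_mod_cast hab
  rw [hlen, div_eq_div_iff hpos.ne' two_ne_zero, sum_Ico_natCast_mul_two a b hab.le]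
  ring

theorem Real.one_sub_rpow_le_exp_neg_mul {x p : ℝ} (hx : x ≤ 1) (hp : 0 ≤ p) :
    (1 - x) ^ p ≤ Real.exp (-(x * p)) := by
  rw [neg_mul_eq_neg_mul, Real.exp_mul]
  exact Real.rpow_le_rpow (by linarith) (Real.one_sub_le_exp_neg x) hp

/-- **Product estimate in the optimality example:**
for `2 ≤ n ≤ T`, `∏_{j=T-n+1}^{T-1} (j/T) ≤ ((T - n/2)/T)^{n/2} ≤ e^{-n²/(4T)}`. -/
theorem example_product_estimate
    (n T : ℕ) (hn : 2 ≤ n) (hT : n ≤ T) :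
    (∏ j ∈ Finset.Ico (T - n + 1) T, ((j : ℝ) / (T : ℝ)))
        ≤ (((T : ℝ) - (n : ℝ) / 2) / (T : ℝ)) ^ ((n : ℝ) / 2) ∧
      (((T : ℝ) - (n : ℝ) / 2) / (T : ℝ)) ^ ((n : ℝ) / 2)
        ≤ Real.exp (-(n : ℝ) ^ 2 / (4 * (T : ℝ))) := by
  have hnR : (2 : ℝ) ≤ n := by exact_mod_cast hn
  have hTR : (n : ℝ) ≤ T := by exact_mod_cast hT
  have hTpos : (0 : ℝ) < T := by linarith
  set a := ((T : ℝ) - n / 2) / T with ha_def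
  have ha : a = 1 - n / (2 * T) := by rw [ha_def]; field_simp
  have hlen : ((#(Ico (T - n + 1) T) : ℕ) : ℝ) = n - 1 := by
    rw [Nat.card_Ico, Nat.cast_sub (by omega)]
    push_cast [Nat.cast_sub hT]; ring
  have hmean : (∑ j ∈ Ico (T - n + 1) T, (j : ℝ) / T) / #(Ico (T - n + 1) T) = a := by
    rw [← sum_div, div_right_comm, mean_Ico_natCast _ _ (by omega)]
    push_cast [Nat.cast_sub hT]; ring
  constructor
  · calc ∏ j ∈ Ico (T - n + 1) T, (j : ℝ) / T ≤ a ^ #(Ico (T - n + 1) T) := by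
          rw [← hmean]; exact Real.prod_le_arith_mean_pow_card _ _ fun j _ ↦ by positivity
      _ = a ^ ((n : ℝ) - 1) := by rw [← Real.rpow_natCast, hlen]
      _ ≤ a ^ ((n : ℝ) / 2) := by
          refine Real.rpow_le_rpow_of_exponent_ge (div_pos (by linarith) hTpos) ?_ (by linarith)
          rw [ha]; linarith [show 0 ≤ (n : ℝ) / (2 * T) by positivity]
  · calc a ^ ((n : ℝ) / 2) ≤ Real.exp (-(n / (2 * T) * (n / 2))) := by
          rw [ha]
          exact Real.one_sub_rpow_le_exp_neg_mul
            (by rw [div_le_one (by positivity)]; linarith) (by positivity)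
      _ = Real.exp (-(n : ℝ) ^ 2 / (4 * T)) := by
          congr 1; field_simp; ring
end

section
/- (Optimality of the T_ε = O(t_mix²/ε) bound: quadratic lower bound on the adiabatic time in the linear-interpolation example.) Let n ≥ 2, Ω = {0,1,…,n}, let P_initial be the matrix whose every row is the point mass at 0, let P_final satisfy (P_final)_{i,i+1} = 1 for 0 ≤ i ≤ n−1 and (P_final)_{n,n} = 1 (so π_f = δ_n), and set P_s = (1−s)P_initial + s P_final. Let ε ∈ (0,1) and let T ≥ n be an integer such that ‖ν P_{1/T} P_{2/T} ⋯ P_{(T−1)/T} P_1 − δ_n‖_TV ≤ ε for all probability distributions ν on Ω. Then T ≥ n² / (−4 log(1−ε)). -/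
open Matrix BigOperators Finset

/-! Write `P_s = (1 - s) P_initial + s P_final`. The mass a row vector puts on the tail
`{k+1, …, n}` after one step of `P_s` is exactly `s` times its mass on `{k, …}`: the reset part
only feeds state `0`, and the shift moves `{k, …}` onto `{k+1, …}`. Hence after the schedule
`s_j = j/T` the mass at `n` equals the product of the last `n` values of the schedule,
`∏_{i<n} (1 - i/T) ≤ exp (-n(n-1)/(2T))`. Accuracy `ε` in total variation forces this mass to be
at least `1 - ε`, and taking logarithms gives `T ≥ n(n-1)/(-2 log(1-ε)) ≥ n²/(-4 log(1-ε))`. -/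

theorem Matrix.sum_vecMul_apply {ι κ R : Type*} [Fintype ι] [CommSemiring R]
    (μ : ι → R) (P : Matrix ι κ R) (S : Finset κ) :
    ∑ j ∈ S, (μ ᵥ* P) j = ∑ i, μ i * ∑ j ∈ S, P i j := by
  simp only [vecMul, dotProduct, mul_sum]
  exact sum_comm

theorem sum_vecMul_eq_one_of_mem_rowStochastic {ι : Type*} [Fintype ι] [DecidableEq ι]
    {ν : ι → ℝ} {M : Matrix ι ι ℝ} (hν : ∑ i, ν i = 1) (hM : M ∈ rowStochastic ℝ ι) :
    ∑ j, (ν ᵥ* M) j = 1 := by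
  rw [← dotProduct_one] at hν ⊢
  exact vecMul_dotProduct_one_eq_one_rowStochastic hM hν

theorem abs_sub_le_tvDist {Ω : Type*} [Fintype Ω] [DecidableEq Ω] {μ ν : Ω → ℝ}
    (h : ∑ x, μ x = ∑ x, ν x) (a : Ω) : |μ a - ν a| ≤ tvDist μ ν := by
  have hrest : ∑ x ∈ univ.erase a, (μ x - ν x) = -(μ a - ν a) := by
    rw [sum_erase_eq_sub (mem_univ a), sum_sub_distrib, h]
    ring
  have htri := abs_sum_le_sum_abs (fun x => μ x - ν x) (univ.erase a)
  rw [hrest, abs_neg] at htri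
  rw [tvDist, ← add_sum_erase _ _ (mem_univ a)]
  linarith

theorem Real.prod_le_exp_sum_sub_one {ι : Type*} (S : Finset ι) {f : ι → ℝ}
    (hf : ∀ i ∈ S, 0 ≤ f i) : ∏ i ∈ S, f i ≤ Real.exp (∑ i ∈ S, (f i - 1)) := by
  rw [Real.exp_sum]
  exact prod_le_prod hf fun i _ => by linarith [Real.add_one_le_exp (f i - 1)]

noncomputable def exPs (n : ℕ) (s : ℝ) : Matrix (Fin (n + 1)) (Fin (n + 1)) ℝ :=
  (1 - s) • exPinit n + s • exPfin n

noncomputable def tailMass {n : ℕ} (k : ℕ) (μ : Fin (n + 1) → ℝ) : ℝ :=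
  ∑ j : Fin (n + 1) with k ≤ j.val, μ j

section

variable {n : ℕ}

theorem tailMass_zero (μ : Fin (n + 1) → ℝ) : tailMass 0 μ = ∑ j, μ j := by
  simp [tailMass]

theorem tailMass_self (μ : Fin (n + 1) → ℝ) : tailMass n μ = μ (Fin.last n) := by
  have : ({j | n ≤ j.val} : Finset (Fin (n + 1))) = {Fin.last n} := by
    ext j
    simp [Fin.ext_iff, Nat.le_antisymm_iff, Nat.le_of_lt_succ j.isLt]
  rw [tailMass, this, sum_singleton]

theorem exDelta_eq_single : exDelta n = Pi.single (Fin.last n) 1 := by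
  ext j
  simp [exDelta, Pi.single_apply, Fin.ext_iff]

theorem isProbDist_exDelta : IsProbDist (exDelta n) := by
  rw [exDelta_eq_single]
  refine ⟨fun j => ?_, by simp⟩
  rw [Pi.single_apply]
  split_ifs <;> norm_num

theorem one_sub_le_apply_last_of_tvDist_exDelta_le {μ : Fin (n + 1) → ℝ} {ε : ℝ}
    (hμ : ∑ j, μ j = 1) (h : tvDist μ (exDelta n) ≤ ε) : 1 - ε ≤ μ (Fin.last n) := by
  have := (abs_sub_le_tvDist (hμ.trans isProbDist_exDelta.2.symm) (Fin.last n)).trans h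
  rw [show exDelta n (Fin.last n) = 1 by simp [exDelta], abs_le] at this
  linarith

theorem exPinit_mem_rowStochastic : exPinit n ∈ rowStochastic ℝ (Fin (n + 1)) := by
  rw [mem_rowStochastic_iff_sum]
  refine ⟨fun i j => ?_, fun i => ?_⟩ <;> simp [exPinit, apply_ite]

theorem exPfin_mem_rowStochastic : exPfin n ∈ rowStochastic ℝ (Fin (n + 1)) := by
  rw [mem_rowStochastic_iff_sum]
  refine ⟨fun i j => ?_, fun i => ?_⟩
  · simp only [exPfin]
    split_ifs <;> norm_num
  · simp only [exPfin]
    rw [Fin.sum_univ_eq_sum_range (fun j => if j = min ((i : ℕ) + 1) n then (1 : ℝ) else 0),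
      sum_ite_eq']
    simp

theorem exPs_mem_rowStochastic {s : ℝ} (hs0 : 0 ≤ s) (hs1 : s ≤ 1) :
    exPs n s ∈ rowStochastic ℝ (Fin (n + 1)) :=
  convex_rowStochastic exPinit_mem_rowStochastic exPfin_mem_rowStochastic
    (by linarith) hs0 (by ring)

theorem list_prod_exPs_mem_rowStochastic {m : ℕ} {s : ℕ → ℝ}
    (hs : ∀ j < m, 0 ≤ s j ∧ s j ≤ 1) :
    ((List.range m).map fun j => exPs n (s j)).prod ∈ rowStochastic ℝ (Fin (n + 1)) :=
  list_prod_mem <| by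
    simp only [List.forall_mem_map, List.mem_range]
    exact fun j hj => exPs_mem_rowStochastic (hs j hj).1 (hs j hj).2

theorem sum_tail_exPinit_row (k : ℕ) (i : Fin (n + 1)) :
    ∑ j : Fin (n + 1) with k + 1 ≤ j.val, exPinit n i j = 0 := by
  refine sum_eq_zero fun j hj => ?_
  simp only [mem_filter] at hj
  have : j ≠ 0 := by rintro rfl; simp at hj
  simp [exPinit, this]

theorem sum_tail_exPfin_row {k : ℕ} (hk : k < n) (i : Fin (n + 1)) :
    ∑ j : Fin (n + 1) with k + 1 ≤ j.val, exPfin n i j = if k ≤ (i : ℕ) then 1 else 0 := by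
  rw [sum_filter]
  simp only [exPfin]
  rw [Fin.sum_univ_eq_sum_range
    (fun j => if k + 1 ≤ j then if j = min ((i : ℕ) + 1) n then (1 : ℝ) else 0 else 0)]
  have hc : min ((i : ℕ) + 1) n ∈ range (n + 1) := mem_range.2 (by omega)
  rw [sum_eq_single_of_mem _ hc fun j _ hj => by simp [hj]]
  split_ifs <;> first | rfl | omega

theorem tailMass_vecMul_exPs {k : ℕ} (hk : k < n) (s : ℝ) (μ : Fin (n + 1) → ℝ) :
    tailMass (k + 1) (μ ᵥ* exPs n s) = s * tailMass k μ := by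
  simp only [tailMass, sum_vecMul_apply, exPs, Matrix.add_apply, Matrix.smul_apply, smul_eq_mul,
    sum_add_distrib, ← mul_sum, sum_tail_exPinit_row, sum_tail_exPfin_row hk]
  simp [sum_filter, mul_sum, mul_comm]

theorem tailMass_vecMul_prod_range (s : ℕ → ℝ) (μ : Fin (n + 1) → ℝ) (m : ℕ) {k : ℕ}
    (hk : k ≤ n) :
    tailMass k (μ ᵥ* ((List.range (m + k)).map fun j => exPs n (s j)).prod) =
      (∏ i ∈ range k, s (m + i)) *
        tailMass 0 (μ ᵥ* ((List.range m).map fun j => exPs n (s j)).prod) := by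
  induction k with
  | zero => simp
  | succ k ih =>
    rw [← add_assoc, List.prod_range_succ, ← vecMul_vecMul, tailMass_vecMul_exPs hk,
      ih (by omega), prod_range_succ]
    ring

end

theorem prod_schedule_le_exp {n T : ℕ} (hnT : n ≤ T) :
    ∏ i ∈ range n, (((T - n + i : ℕ) : ℝ) + 1) / T ≤ Real.exp (-(n * (n - 1)) / (2 * T)) := by
  refine (Real.prod_le_exp_sum_sub_one _ fun i _ => by positivity).trans_eq (congrArg _ ?_)
  rcases Nat.eq_zero_or_pos T with rfl | hT
  · simp [Nat.le_zero.1 hnT]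
  have gauss : ∀ k : ℕ, (∑ i ∈ range k, (i : ℝ)) * 2 = k * (k - 1) := by
    intro k
    induction k with
    | zero => simp
    | succ k ih => rw [sum_range_succ, add_mul, ih]; push_cast; ring
  have hterm : ∀ i ∈ range n, (((T - n + i : ℕ) : ℝ) + 1) / T - 1 = ((i : ℝ) + 1 - n) / T := by
    intro i _
    push_cast [Nat.cast_sub hnT]
    field_simp
    ring
  rw [sum_congr rfl hterm, ← sum_div, sum_sub_distrib, sum_add_distrib]
  simp only [sum_const, card_range, nsmul_eq_mul, mul_one]
  field_simp
  linarith [gauss n]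

theorem sq_div_neg_four_log_le_of_one_sub_le_exp {n T ε : ℝ} (hn : 2 ≤ n) (hε0 : 0 < ε)
    (hε1 : ε < 1) (hT : 0 < T) (h : 1 - ε ≤ Real.exp (-(n * (n - 1)) / (2 * T))) :
    n ^ 2 / (-4 * Real.log (1 - ε)) ≤ T := by
  have hlog : Real.log (1 - ε) ≤ -(n * (n - 1)) / (2 * T) :=
    (Real.log_le_iff_le_exp (by linarith)).2 h
  have hneg : Real.log (1 - ε) < 0 := Real.log_neg (by linarith) (by linarith)
  rw [div_le_iff₀ (by linarith)]
  rw [le_div_iff₀ (by positivity), ← neg_le_neg_iff, neg_neg] at hlog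
  nlinarith

/-- **Optimality of the `T_ε = O(t_mix²/ε)` bound:** in the linear-interpolation
example on `{0,…,n}` (where `t_mix = n`), any adiabatic time `T` achieving accuracy
`ε` must satisfy `T ≥ n²/(-4 log(1-ε))`. -/
theorem example_quadratic_lower_bound
    (n : ℕ) (hn : 2 ≤ n) (ε : ℝ) (hε0 : 0 < ε) (hε1 : ε < 1)
    (T : ℕ) (hT : n ≤ T)
    (hadiab : ∀ ν : Fin (n + 1) → ℝ, IsProbDist ν →
      tvDist (ν ᵥ* ((List.range T).map (fun j =>
          (1 - (j + 1 : ℝ) / (T : ℝ)) • exPinit n + ((j + 1 : ℝ) / (T : ℝ)) • exPfin n)).prod)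
        (exDelta n) ≤ ε) :
    (T : ℝ) ≥ (n : ℝ) ^ 2 / (-4 * Real.log (1 - ε)) := by
  have hT0 : (0 : ℝ) < T := by exact_mod_cast (show 0 < T by omega)
  set s : ℕ → ℝ := fun j => ((j : ℝ) + 1) / T
  set Q : ℕ → Matrix (Fin (n + 1)) (Fin (n + 1)) ℝ :=
    fun m => ((List.range m).map fun j => exPs n (s j)).prod
  have hsum : ∀ m ≤ T, ∑ j, (exDelta n ᵥ* Q m) j = 1 := fun m hm =>
    sum_vecMul_eq_one_of_mem_rowStochastic isProbDist_exDelta.2 <|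
      list_prod_exPs_mem_rowStochastic fun j hj =>
        ⟨by positivity, div_le_one_of_le₀ (by exact_mod_cast (by omega : j + 1 ≤ T)) hT0.le⟩
  have hacc := hadiab _ isProbDist_exDelta
  -- the statement lifts `List.range T` to a `List ℝ` through the list monad
  simp only [bind_pure_comp, List.map_eq_map, List.map_map] at hacc
  change tvDist (exDelta n ᵥ* Q T) (exDelta n) ≤ ε at hacc
  have hlast := one_sub_le_apply_last_of_tvDist_exDelta_le (hsum T le_rfl) hacc
  have htail := tailMass_vecMul_prod_range s (exDelta n) (T - n) le_rfl
  rw [Nat.sub_add_cancel hT, tailMass_self, tailMass_zero, hsum _ (Nat.sub_le T n), mul_one]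
    at htail
  exact sq_div_neg_four_log_le_of_one_sub_le_exp (by exact_mod_cast hn) hε0 hε1 hT0
    (hlast.trans (htail.trans_le (prod_schedule_le_exp hT)))
end

section
/- (Lower bound for the example with a general schedule φ.) Let n ≥ 1, Ω = {0,1,…,n}, let P_initial be the matrix whose every row is the point mass at 0, let P_final satisfy (P_final)_{i,i+1} = 1 for 0 ≤ i ≤ n−1 and (P_final)_{n,n} = 1 (so π_f = δ_n). Let φ : [0,1] → [0,1] be continuous with φ(0)=0 and φ(1)=1, and for s ∈ [0,1] set P_s = (1−φ(s)) P_initial + φ(s) P_final. Then for every integer T ≥ n and every probability distribution ν on Ω, ‖ν P_{1/T} P_{2/T} ⋯ P_{(T−1)/T} P_1 − δ_n‖_TV ≥ 1 − ∏_{j=T−n+1}^{T} φ(j/T). -/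
/-! A step of `P_s` sends all mass either to `0` (weight `1 - φ s`) or one place up (weight `φ s`).
Since `0` lies below every threshold `m + 1 ≤ n`, the mass on `{m+1, …, n}` after a step is exactly
`φ s` times the mass on `{m, …, n}` before it. Iterating `n` times, the mass at `n` after the last
step is `∏_{j=T-n+1}^{T} φ(j/T)` times the total mass `1`, and a distribution putting mass `p` on
`n` is at total-variation distance at least `1 - p` from `δ_n`. -/

open Matrix BigOperators Finset

section FunMatrix

variable {Ω R : Type*} [Fintype Ω] [DecidableEq Ω] [Semiring R]

def funMatrix (f : Ω → Ω) : Matrix Ω Ω R :=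
  of fun i j => if j = f i then 1 else 0

theorem sum_vecMul_funMatrix (f : Ω → Ω) (μ : Ω → R) (s : Finset Ω) :
    ∑ j ∈ s, (μ ᵥ* funMatrix f) j = ∑ i with f i ∈ s, μ i := by
  simp only [vecMul, dotProduct, funMatrix, of_apply, mul_ite, mul_one, mul_zero]
  rw [sum_comm, sum_filter]
  exact sum_congr rfl fun i _ => sum_ite_eq' s (f i) fun _ => μ i

end FunMatrix

theorem vecMul_prod_map_range_succ {Ω R : Type*} [Fintype Ω] [DecidableEq Ω] [Semiring R]
    (ν : Ω → R) (M : ℕ → Matrix Ω Ω R) (t : ℕ) :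
    ν ᵥ* ((List.range (t + 1)).map M).prod = (ν ᵥ* ((List.range t).map M).prod) ᵥ* M t := by
  simp [List.range_succ, vecMul_vecMul]

theorem sub_le_tvDist_single {Ω : Type*} [Fintype Ω] [DecidableEq Ω] (μ : Ω → ℝ)
    (hμ : ∑ x, μ x = 1) (a : Ω) : 1 - μ a ≤ tvDist μ (Pi.single a 1 : Ω → ℝ) := by
  have hrest : 1 - μ a ≤ ∑ x ∈ univ.erase a, |μ x| := by
    rw [← hμ, ← add_sum_erase univ μ (mem_univ a), add_sub_cancel_left]
    exact abs_sum_le_sum_abs _ _ |>.trans' (le_abs_self _)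
  have hsplit :
      ∑ x, |μ x - (Pi.single a 1 : Ω → ℝ) x| = |μ a - 1| + ∑ x ∈ univ.erase a, |μ x| := by
    rw [← add_sum_erase univ _ (mem_univ a), Pi.single_eq_same]
    congr 1
    exact sum_congr rfl fun x hx => by rw [Pi.single_eq_of_ne (ne_of_mem_erase hx), sub_zero]
  rw [tvDist, hsplit]
  linarith [neg_abs_le (μ a - 1)]

theorem prod_Icc_sub_add_one_eq_prod_range {M : Type*} [CommMonoid M] (f : ℕ → M) {n T : ℕ}
    (hT : n ≤ T) : ∏ j ∈ Icc (T - n + 1) T, f j = ∏ i ∈ range n, f (T - n + i + 1) := by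
  rw [← Ico_add_one_right_eq_Icc, prod_Ico_eq_prod_range, Nat.add_sub_add_right,
    Nat.sub_sub_self hT]
  exact prod_congr rfl fun i _ => by rw [Nat.add_right_comm]

section Example

variable {n : ℕ}

def satSucc (i : Fin (n + 1)) : Fin (n + 1) :=
  ⟨min (i.val + 1) n, by omega⟩

theorem exPinit_eq_funMatrix : exPinit n = funMatrix fun _ => 0 := by
  ext i j
  simp [exPinit, funMatrix]

theorem exPfin_eq_funMatrix : exPfin n = funMatrix satSucc := by
  ext i j
  simp [exPfin, funMatrix, satSucc, Fin.ext_iff]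

noncomputable def exP (n : ℕ) (c : ℝ) : Matrix (Fin (n + 1)) (Fin (n + 1)) ℝ :=
  (1 - c) • exPinit n + c • exPfin n

theorem sum_vecMul_exP (c : ℝ) (μ : Fin (n + 1) → ℝ) (s : Finset (Fin (n + 1))) :
    ∑ j ∈ s, (μ ᵥ* exP n c) j
      = (1 - c) * ∑ i with (0 : Fin (n + 1)) ∈ s, μ i + c * ∑ i with satSucc i ∈ s, μ i := by
  simp only [exP, vecMul_add, vecMul_smul, Pi.add_apply, Pi.smul_apply, smul_eq_mul,
    sum_add_distrib, ← mul_sum, exPinit_eq_funMatrix, exPfin_eq_funMatrix, sum_vecMul_funMatrix]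

theorem sum_vecMul_exP_univ (c : ℝ) (μ : Fin (n + 1) → ℝ) :
    ∑ j, (μ ᵥ* exP n c) j = ∑ j, μ j := by
  simp only [sum_vecMul_exP, mem_univ, filter_true]
  ring

theorem tailMass_vecMul_exP {m : ℕ} (hm : m < n) (c : ℝ) (μ : Fin (n + 1) → ℝ) :
    ∑ j : Fin (n + 1) with m + 1 ≤ j.val, (μ ᵥ* exP n c) j
      = c * ∑ j : Fin (n + 1) with m ≤ j.val, μ j := by
  have hzero : ¬ m + 1 ≤ (0 : Fin (n + 1)).val := by simp
  have hsucc : ∀ i : Fin (n + 1), m + 1 ≤ (satSucc i).val ↔ m ≤ i.val := fun i => by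
    simp only [satSucc]
    omega
  simp only [sum_vecMul_exP, mem_filter, mem_univ, true_and, hzero, hsucc, filter_false,
    sum_empty, mul_zero, zero_add]

noncomputable def exChain (ν : Fin (n + 1) → ℝ) (a : ℕ → ℝ) (t : ℕ) : Fin (n + 1) → ℝ :=
  ν ᵥ* ((List.range t).map fun k => exP n (a k)).prod

theorem exChain_succ (ν : Fin (n + 1) → ℝ) (a : ℕ → ℝ) (t : ℕ) :
    exChain ν a (t + 1) = exChain ν a t ᵥ* exP n (a t) :=
  vecMul_prod_map_range_succ ν _ t

theorem sum_exChain (ν : Fin (n + 1) → ℝ) (a : ℕ → ℝ) (t : ℕ) :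
    ∑ j, exChain ν a t j = ∑ j, ν j := by
  induction t with
  | zero => simp [exChain]
  | succ t ih => rw [exChain_succ, sum_vecMul_exP_univ, ih]

theorem tailMass_exChain (ν : Fin (n + 1) → ℝ) (a : ℕ → ℝ) (s : ℕ) {m : ℕ} (hm : m ≤ n) :
    ∑ j : Fin (n + 1) with m ≤ j.val, exChain ν a (s + m) j
      = (∏ i ∈ range m, a (s + i)) * ∑ j, ν j := by
  induction m with
  | zero => simp [sum_exChain]
  | succ m ih =>
    rw [← add_assoc, exChain_succ, tailMass_vecMul_exP hm, ih (by omega), prod_range_succ]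
    ring

theorem exChain_last (ν : Fin (n + 1) → ℝ) (a : ℕ → ℝ) {T : ℕ} (hT : n ≤ T) :
    exChain ν a T (Fin.last n) = (∏ i ∈ range n, a (T - n + i)) * ∑ j, ν j := by
  have hlast : (univ.filter fun j : Fin (n + 1) => n ≤ j.val) = {Fin.last n} := by
    ext j
    simp only [mem_filter, mem_univ, true_and, mem_singleton, Fin.ext_iff, Fin.val_last]
    omega
  rw [← tailMass_exChain ν a (T - n) le_rfl, Nat.sub_add_cancel hT, hlast, sum_singleton]

end Example

theorem example_schedule_lower_bound_general
    (n : ℕ)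
    (φ : ℝ → ℝ)
    (T : ℕ) (hT : n ≤ T)
    (ν : Fin (n + 1) → ℝ) (hν : IsProbDist ν) :
    tvDist (ν ᵥ* ((List.range T).map (fun j =>
        (1 - φ ((j + 1 : ℝ) / (T : ℝ))) • exPinit n
          + φ ((j + 1 : ℝ) / (T : ℝ)) • exPfin n)).prod)
      (exDelta n)
    ≥ 1 - ∏ j ∈ Finset.Icc (T - n + 1) T, φ ((j : ℝ) / (T : ℝ)) := by
  set a : ℕ → ℝ := fun k => φ ((k + 1 : ℝ) / T)
  -- `List.range T` is coerced to `List ℝ` in the statement; pull the cast into the map.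
  simp only [bind_pure_comp, List.map_eq_map, List.map_map]
  change 1 - _ ≤ tvDist (exChain ν a T) (exDelta n)
  have hmass : ∑ j, exChain ν a T j = 1 := by rw [sum_exChain, hν.2]
  have hbound := sub_le_tvDist_single _ hmass (Fin.last n)
  rw [exChain_last ν a hT, hν.2, mul_one] at hbound
  rw [exDelta_eq_single, prod_Icc_sub_add_one_eq_prod_range _ hT]
  convert hbound using 4 with i
  push_cast
  rfl

/-- **Lower bound for the example with a general schedule `φ`:**
for `P_s = (1 - φ(s)) P_initial + φ(s) P_final` on `{0,…,n}`, every starting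
distribution stays at total-variation distance at least
`1 - ∏_{j=T-n+1}^{T} φ(j/T)` from `δ_n`. -/
theorem example_schedule_lower_bound
    (n : ℕ) (hn : 1 ≤ n)
    (φ : ℝ → ℝ) (hcont : ContinuousOn φ (Set.Icc 0 1))
    (h0 : φ 0 = 0) (h1 : φ 1 = 1)
    (hrange : ∀ s ∈ Set.Icc (0:ℝ) 1, φ s ∈ Set.Icc (0:ℝ) 1)
    (T : ℕ) (hT : n ≤ T)
    (ν : Fin (n + 1) → ℝ) (hν : IsProbDist ν) :
    tvDist (ν ᵥ* ((List.range T).map (fun j =>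
        (1 - φ ((j + 1 : ℝ) / (T : ℝ))) • exPinit n
          + φ ((j + 1 : ℝ) / (T : ℝ)) • exPfin n)).prod)
      (exDelta n)
    ≥ 1 - ∏ j ∈ Finset.Icc (T - n + 1) T, φ ((j : ℝ) / (T : ℝ)) :=
  example_schedule_lower_bound_general n φ T hT ν hν
end
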